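/- Let G be a finite group and H a normal subgroup of G with |H| = n such that the quotient group G/H is isomorphic to an elementary abelian 2-group (Z_2)^k with k ≥ 3. Then, for any four distinct non-identity elements a_1H, a_2H, a_3H, a_4H of G/H, the subgraph of the normal subgroup based power graph Γ_H(G) induced by the set a_1H ∪ a_2H ∪ a_3H ∪ a_4H ∪ {e} is isomorphic to the join K_1 ∨ 4K_n. -/

import Mathlib

/-- The vertex set of the normal subgroup based power graph: `(G \ H) ∪ {e}`. -/
def nsbVertexSet {G : Type*} [Group G] (H : Subgroup G) : Set G :=
  {x | x ∉ H} ∪ {1}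

/-- The normal subgroup based power graph `Γ_H(G)`: vertices are `(G \ H) ∪ {e}` and two
distinct vertices `a`, `b` are adjacent iff `aH = b^m H` or `bH = a^n H` for some
positive integers `m`, `n`. -/
def nsbPowerGraph (G : Type*) [Group G] (H : Subgroup G) :
    SimpleGraph (nsbVertexSet H) where
  Adj a b := (a : G) ≠ (b : G) ∧
    ((∃ m : ℕ, 0 < m ∧ (QuotientGroup.mk (a : G) : G ⧸ H) = QuotientGroup.mk ((b : G) ^ m)) ∨
     (∃ n : ℕ, 0 < n ∧ (QuotientGroup.mk (b : G) : G ⧸ H) = QuotientGroup.mk ((a : G) ^ n)))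
  symm := ⟨fun a b ⟨hne, h⟩ => ⟨hne.symm, h.symm⟩⟩
  loopless := ⟨fun a ⟨hne, _⟩ => hne rfl⟩

/-- The power graph of a group: two distinct elements are adjacent iff one is a positive
power of the other. -/
def powerGraph (K : Type*) [Group K] : SimpleGraph K where
  Adj x y := x ≠ y ∧ ((∃ m : ℕ, 0 < m ∧ x = y ^ m) ∨ (∃ n : ℕ, 0 < n ∧ y = x ^ n))
  symm := ⟨fun x y ⟨hne, h⟩ => ⟨hne.symm, h.symm⟩⟩
  loopless := ⟨fun x ⟨hne, _⟩ => hne rfl⟩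

/-- The complete graph `K_n`. -/
def kGraph (n : ℕ) : SimpleGraph (Fin n) := ⊤

/-- The disjoint union `mK_n` of `m` copies of the complete graph `K_n`. -/
def unionKGraph (m n : ℕ) : SimpleGraph (Fin m × Fin n) where
  Adj x y := x.1 = y.1 ∧ x.2 ≠ y.2
  symm := ⟨fun x y ⟨h1, h2⟩ => ⟨h1.symm, h2.symm⟩⟩
  loopless := ⟨fun x ⟨_, h⟩ => h rfl⟩

/-- The join `Γ₁ ∨ Γ₂` of two graphs: their disjoint union together with all edges
between the two parts. -/
def graphJoin {α β : Type*} (G : SimpleGraph α) (H : SimpleGraph β) :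
    SimpleGraph (α ⊕ β) where
  Adj u v := match u, v with
    | Sum.inl u, Sum.inl v => G.Adj u v
    | Sum.inr u, Sum.inr v => H.Adj u v
    | _, _ => True
  symm := ⟨fun u v => match u, v with
    | Sum.inl u, Sum.inl v => G.adj_symm
    | Sum.inr u, Sum.inr v => H.adj_symm
    | Sum.inl _, Sum.inr _ | Sum.inr _, Sum.inl _ => fun _ => trivial⟩
  loopless := ⟨fun u => by cases u <;> simp [SimpleGraph.irrefl]⟩

/-!
Since `G ⧸ H` has exponent 2, every positive power of a coset `aH` is `H` or `aH`. Hence two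
vertices outside `H` are adjacent exactly when they lie in the same coset, while `e` is adjacent
to every vertex `x` because `x ^ orderOf x = e`. The induced subgraph is therefore the dominating
vertex `e` joined to one clique per coset, each of size `|aH| = |H| = n`.
-/

theorem SimpleGraph.nonempty_iso_graphJoin_of_dominating {V W : Type*} {Γ : SimpleGraph V}
    {Γ' : SimpleGraph W} (o : V) (ho : ∀ v, v ≠ o → Γ.Adj o v) (f : Γ' ↪g Γ)
    (hf : Set.range f = {o}ᶜ) :
    Nonempty (Γ ≃g graphJoin (kGraph 1) Γ') := by
  have hfo : ∀ w, f w ≠ o := fun w => by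
    simpa [hf] using Set.mem_range_self (f := f) w
  let φ : Fin 1 ⊕ W → V := Sum.elim (fun _ => o) f
  have hφ : Function.Bijective φ := by
    refine ⟨?_, fun v => ?_⟩
    · rintro (a | p) (a' | q) h
      · rw [Subsingleton.elim a a']
      · exact absurd h.symm (hfo q)
      · exact absurd h (hfo p)
      · rw [f.injective h]
    · by_cases hv : v = o
      · exact ⟨.inl 0, hv.symm⟩
      · obtain ⟨w, rfl⟩ : v ∈ Set.range f := hf ▸ hv
        exact ⟨.inr w, rfl⟩
  refine ⟨RelIso.symm ⟨Equiv.ofBijective φ hφ, ?_⟩⟩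
  rintro (a | p) (a' | q)
  · exact iff_of_false (Γ.irrefl (v := o)) (fun h => h (Subsingleton.elim a a'))
  · exact iff_of_true (ho _ (hfo q)) trivial
  · exact iff_of_true (ho _ (hfo p)).symm trivial
  · exact f.map_adj_iff

theorem pow_eq_one_or_self_of_sq_eq_one {M : Type*} [Monoid M] {c : M} (hc : c ^ 2 = 1)
    (m : ℕ) : c ^ m = 1 ∨ c ^ m = c := by
  rcases Nat.even_or_odd' m with ⟨t, rfl | rfl⟩
  · left
    rw [pow_mul, hc, one_pow]
  · right
    rw [pow_succ, pow_mul, hc, one_pow, one_mul]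

theorem MulEquiv.sq_eq_one_of_pi_zmod_two {Q ι : Type*} [Monoid Q]
    (e : Q ≃* (ι → Multiplicative (ZMod 2))) (c : Q) : c ^ 2 = 1 := by
  have h2 : ∀ y : Multiplicative (ZMod 2), y ^ 2 = 1 := by decide
  apply e.injective
  rw [map_pow, map_one]
  funext i
  exact h2 (e c i)

section NsbPowerGraph

variable {G : Type*} [Group G] {H : Subgroup G}

theorem mem_nsbVertexSet_of_mk_ne_one [H.Normal] {x : G} (hx : (x : G ⧸ H) ≠ 1) :
    x ∈ nsbVertexSet H :=
  Or.inl fun hxH => hx ((QuotientGroup.eq_one_iff x).mpr hxH)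

theorem nsbPowerGraph_adj_one [Finite G] {v : nsbVertexSet H} (hv : (v : G) ≠ 1) :
    (nsbPowerGraph G H).Adj ⟨1, Or.inr rfl⟩ v :=
  ⟨hv.symm, Or.inl ⟨orderOf (v : G), orderOf_pos _, by rw [pow_orderOf_eq_one]⟩⟩

theorem nsbPowerGraph_adj_iff_of_sq_eq_one [H.Normal] (hsq : ∀ c : G ⧸ H, c ^ 2 = 1)
    {u v : nsbVertexSet H} (hu : ((u : G) : G ⧸ H) ≠ 1) (hv : ((v : G) : G ⧸ H) ≠ 1) :
    (nsbPowerGraph G H).Adj u v ↔ (u : G) ≠ v ∧ ((u : G) : G ⧸ H) = (v : G) := by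
  refine ⟨fun ⟨hne, hpow⟩ => ⟨hne, ?_⟩, fun ⟨hne, heq⟩ => ⟨hne, Or.inl ⟨1, one_pos, ?_⟩⟩⟩
  · rcases hpow with ⟨m, -, hm⟩ | ⟨m, -, hm⟩
    · rw [QuotientGroup.mk_pow] at hm
      exact (pow_eq_one_or_self_of_sq_eq_one (hsq _) m).elim (fun h => absurd (hm.trans h) hu)
        hm.trans
    · rw [QuotientGroup.mk_pow] at hm
      exact (pow_eq_one_or_self_of_sq_eq_one (hsq _) m).elim (fun h => absurd (hm.trans h) hv)
        (fun h => (hm.trans h).symm)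
  · rwa [pow_one]

end NsbPowerGraph

section Cosets

variable {G : Type*} [Group G] {H : Subgroup G} {ι κ : Type*}

noncomputable def cosetElem (b : ι → G ⧸ H) (σ : κ ≃ H) (p : ι × κ) : G :=
  (b p.1).out * σ p.2

theorem mk_cosetElem (b : ι → G ⧸ H) (σ : κ ≃ H) (p : ι × κ) :
    ((cosetElem b σ p : G) : G ⧸ H) = b p.1 := by
  rw [cosetElem, QuotientGroup.mk_mul_of_mem _ (σ p.2).2, QuotientGroup.out_eq']

theorem cosetElem_injective {b : ι → G ⧸ H} (hb : Function.Injective b) (σ : κ ≃ H) :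
    Function.Injective (cosetElem b σ) := by
  rintro ⟨i, j⟩ ⟨i', j'⟩ h
  obtain rfl : i = i' := hb (by rw [← mk_cosetElem b σ (i, j), h, mk_cosetElem])
  obtain rfl : j = j' := σ.injective (Subtype.ext (mul_left_cancel h))
  rfl

theorem exists_cosetElem_eq (b : ι → G ⧸ H) (σ : κ ≃ H) {x : G} {i : ι}
    (hx : (x : G ⧸ H) = b i) : ∃ j, cosetElem b σ (i, j) = x :=
  ⟨σ.symm ⟨(b i).out⁻¹ * x, QuotientGroup.eq.mp ((QuotientGroup.out_eq' _).trans hx.symm)⟩, by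
    simp [cosetElem]⟩

end Cosets

theorem nonempty_iso_nsbPowerGraph_induce_cosets {G : Type*} [Group G] [Finite G] {H : Subgroup G}
    [H.Normal] (hsq : ∀ c : G ⧸ H, c ^ 2 = 1) {m n : ℕ} (hcard : Nat.card H = n)
    (b : Fin m → G ⧸ H) (hinj : Function.Injective b) (hne1 : ∀ i, b i ≠ 1) :
    Nonempty (((nsbPowerGraph G H).induce
      {v : nsbVertexSet H | (∃ i, ((v : G) : G ⧸ H) = b i) ∨ (v : G) = 1})
      ≃g graphJoin (kGraph 1) (unionKGraph m n)) := by
  set S := {v : nsbVertexSet H | (∃ i, ((v : G) : G ⧸ H) = b i) ∨ (v : G) = 1}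
  have ext_val : ∀ {v w : S}, ((v : nsbVertexSet H) : G) = w → v = w :=
    fun h => Subtype.ext (Subtype.ext h)
  let σ : Fin n ≃ H := (Finite.equivFinOfCardEq hcard).symm
  have hmk : ∀ p, ((cosetElem b σ p : G) : G ⧸ H) ≠ 1 := fun p => by
    rw [mk_cosetElem]
    exact hne1 p.1
  let f : Fin m × Fin n → S := fun p =>
    ⟨⟨cosetElem b σ p, mem_nsbVertexSet_of_mk_ne_one (hmk p)⟩, Or.inl ⟨p.1, mk_cosetElem b σ p⟩⟩
  have hadj : ∀ p q,
      ((nsbPowerGraph G H).induce S).Adj (f p) (f q) ↔ (unionKGraph m n).Adj p q := by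
    intro p q
    rw [SimpleGraph.induce_adj, nsbPowerGraph_adj_iff_of_sq_eq_one hsq (hmk p) (hmk q)]
    change cosetElem b σ p ≠ cosetElem b σ q ∧
      ((cosetElem b σ p : G) : G ⧸ H) = cosetElem b σ q ↔ p.1 = q.1 ∧ p.2 ≠ q.2
    rw [(cosetElem_injective hinj σ).ne_iff, mk_cosetElem, mk_cosetElem, hinj.eq_iff, Ne,
      Prod.ext_iff]
    tauto
  let F : unionKGraph m n ↪g (nsbPowerGraph G H).induce S :=
    ⟨⟨f, fun p q h => cosetElem_injective hinj σ (congrArg (fun v : S => (v : G)) h)⟩,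
      hadj _ _⟩
  refine SimpleGraph.nonempty_iso_graphJoin_of_dominating ⟨⟨1, Or.inr rfl⟩, Or.inr rfl⟩
    (fun v hv => nsbPowerGraph_adj_one fun h => hv (ext_val h)) F ?_
  ext v
  rw [Set.mem_compl_singleton_iff]
  constructor
  · rintro ⟨p, rfl⟩ h
    have h1 : cosetElem b σ p = 1 := congrArg (fun v : S => (v : G)) h
    exact hmk p (by rw [h1, QuotientGroup.mk_one])
  · intro hv
    obtain ⟨i, hi⟩ := v.2.resolve_right fun h => hv (ext_val h)
    obtain ⟨j, hj⟩ := exists_cosetElem_eq b σ hi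
    exact ⟨(i, j), ext_val hj⟩

theorem statement_19_general {G : Type*} [Group G] [Fintype G] (H : Subgroup G) [H.Normal]
    (n : ℕ) (hcard : Nat.card H = n) (k : ℕ)
    (hq : Nonempty (G ⧸ H ≃* (Fin k → Multiplicative (ZMod 2))))
    (b : Fin 4 → G ⧸ H) (hinj : Function.Injective b) (hne1 : ∀ i, b i ≠ 1) :
    Nonempty (((nsbPowerGraph G H).induce
      {v : nsbVertexSet H |
        (∃ i, (QuotientGroup.mk (v : G) : G ⧸ H) = b i) ∨ (v : G) = 1})
      ≃g graphJoin (kGraph 1) (unionKGraph 4 n)) := by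
  obtain ⟨e⟩ := hq
  exact nonempty_iso_nsbPowerGraph_induce_cosets e.sq_eq_one_of_pi_zmod_two hcard b hinj hne1

/-- If `|H| = n` and `G/H ≅ (Z₂)^k` with `k ≥ 3`, then for any four
distinct non-identity elements `a₁H, a₂H, a₃H, a₄H` of `G/H`, the subgraph of `Γ_H(G)`
induced by `a₁H ∪ a₂H ∪ a₃H ∪ a₄H ∪ {e}` is isomorphic to `K₁ ∨ 4Kₙ`. -/
theorem statement_19 {G : Type*} [Group G] [Fintype G] (H : Subgroup G) [H.Normal]
    (n : ℕ) (hcard : Nat.card H = n) (k : ℕ) (hk : 3 ≤ k)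
    (hq : Nonempty (G ⧸ H ≃* (Fin k → Multiplicative (ZMod 2))))
    (b : Fin 4 → G ⧸ H) (hinj : Function.Injective b) (hne1 : ∀ i, b i ≠ 1) :
    Nonempty (((nsbPowerGraph G H).induce
      {v : nsbVertexSet H |
        (∃ i, (QuotientGroup.mk (v : G) : G ⧸ H) = b i) ∨ (v : G) = 1})
      ≃g graphJoin (kGraph 1) (unionKGraph 4 n)) :=
  statement_19_general H n hcard k hq b hinj hne1
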